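/- arXiv:1608.07312 — 3 statements merged into one kernel-verified Lean document; each statement's English description precedes it below -/
import Mathlib

section
/- Let m, v ∈ ℝ³ with |m| = 1 and m · v = 0, let k > 0, and define m⁺ = (m + k v)/|m + k v|. Then |m⁺ - m - k v| ≤ (1/2) k² |v|². -/
/-! Since `v ⊥ m`, Pythagoras gives `|m + k v| = √(1 + k²|v|²) ≤ 1 + k²|v|²/2`, and
normalizing a vector `w` moves it by exactly `| 1 - |w| |`. -/

open scoped RealInnerProductSpace

noncomputable def cross3 (a b : EuclideanSpace ℝ (Fin 3)) : EuclideanSpace ℝ (Fin 3) :=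
  WithLp.toLp 2 ![a 1 * b 2 - a 2 * b 1, a 2 * b 0 - a 0 * b 2, a 0 * b 1 - a 1 * b 0]

theorem norm_inv_norm_smul_sub_self {E : Type*} [NormedAddCommGroup E] [NormedSpace ℝ E]
    {w : E} (hw : w ≠ 0) : ‖‖w‖⁻¹ • w - w‖ = |1 - ‖w‖| := by
  have hsub : ‖w‖⁻¹ • w - w = (‖w‖⁻¹ - 1) • w := by rw [sub_smul, one_smul]
  rw [hsub, norm_smul, Real.norm_eq_abs, ← abs_norm, ← abs_mul, abs_norm, sub_one_mul,
    inv_mul_cancel₀ (norm_ne_zero_iff.2 hw)]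

theorem norm_add_smul_of_inner_eq_zero {F : Type*} [NormedAddCommGroup F]
    [InnerProductSpace ℝ F] {x y : F} (h : ⟪x, y⟫ = 0) (k : ℝ) :
    ‖x + k • y‖ = √(‖x‖ ^ 2 + k ^ 2 * ‖y‖ ^ 2) := by
  have hxy : ⟪x, k • y⟫ = 0 := by rw [real_inner_smul_right, h, mul_zero]
  rw [← sq_abs k, ← mul_pow, ← Real.norm_eq_abs, ← norm_smul, sq, sq]
  exact norm_add_eq_sqrt_iff_real_inner_eq_zero.2 hxy

theorem renormalization_second_order_general (m v : EuclideanSpace ℝ (Fin 3)) (hm : ‖m‖ = 1)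
    (hmv : ⟪m, v⟫ = 0) (k : ℝ)
    (mplus : EuclideanSpace ℝ (Fin 3)) (hmp : mplus = ‖m + k • v‖⁻¹ • (m + k • v)) :
    ‖mplus - m - k • v‖ ≤ (1 / 2) * k ^ 2 * ‖v‖ ^ 2 := by
  subst hmp
  have hkv : 0 ≤ k ^ 2 * ‖v‖ ^ 2 := by positivity
  have hnorm : ‖m + k • v‖ = √(1 + k ^ 2 * ‖v‖ ^ 2) := by
    rw [norm_add_smul_of_inner_eq_zero hmv, hm, one_pow]
  have hone : 1 ≤ ‖m + k • v‖ := hnorm ▸ Real.one_le_sqrt.2 (le_add_of_nonneg_right hkv)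
  have hne : m + k • v ≠ 0 := norm_pos_iff.1 (by linarith)
  rw [sub_sub, norm_inv_norm_smul_sub_self hne, abs_sub_comm, abs_of_nonneg (by linarith), hnorm]
  linarith [Real.sqrt_one_add_le (by linarith : -1 ≤ k ^ 2 * ‖v‖ ^ 2)]

theorem renormalization_second_order (m v : EuclideanSpace ℝ (Fin 3)) (hm : ‖m‖ = 1)
    (hmv : ⟪m, v⟫ = 0) (k : ℝ) (hk : 0 < k)
    (mplus : EuclideanSpace ℝ (Fin 3)) (hmp : mplus = ‖m + k • v‖⁻¹ • (m + k • v)) :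
    ‖mplus - m - k • v‖ ≤ (1 / 2) * k ^ 2 * ‖v‖ ^ 2 :=
  renormalization_second_order_general m v hm hmv k mplus hmp
end

section
/- Let A be a symmetric real N×N matrix such that A_{ij} ≤ 0 for all i ≠ j and Σⱼ A_{ij} = 0 for every i (the stiffness-matrix property of a mesh with nonpositive off-diagonal entries and piecewise-linear basis functions summing to a constant). Then for vectors w₁,…,w_N ∈ ℝ³ with |wᵢ| ≥ 1 for all i, setting ŵᵢ = wᵢ/|wᵢ|, one has Σ_{i,j} A_{ij} ŵᵢ·ŵⱼ ≤ Σ_{i,j} A_{ij} wᵢ·wⱼ. -/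
open scoped RealInnerProductSpace

lemma quad_identity (N : ℕ) (A : Matrix (Fin N) (Fin N) ℝ)
    (hsymm : A.IsSymm) (hrow : ∀ i, ∑ j, A i j = 0)
    (v : Fin N → EuclideanSpace ℝ (Fin 3)) :
    ∑ i, ∑ j, A i j * ‖v i - v j‖ ^ 2 = -2 * ∑ i, ∑ j, A i j * ⟪v i, v j⟫ := by
  have hcol : ∀ j, ∑ i, A i j = 0 := by
    intro j
    have := hrow j
    rw [← this]
    exact Finset.sum_congr rfl fun i _ => hsymm.apply i j ▸ rfl
  have expand : ∀ i j, ‖v i - v j‖ ^ 2 = ‖v i‖ ^ 2 - 2 * ⟪v i, v j⟫ + ‖v j‖ ^ 2 := by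
    intro i j
    rw [@norm_sub_sq_real]
  calc ∑ i, ∑ j, A i j * ‖v i - v j‖ ^ 2
      = ∑ i, ∑ j, (A i j * ‖v i‖ ^ 2 + A i j * ‖v j‖ ^ 2
          - 2 * (A i j * ⟪v i, v j⟫)) := by
        refine Finset.sum_congr rfl fun i _ => Finset.sum_congr rfl fun j _ => ?_
        rw [expand i j]; ring
    _ = ∑ i, ∑ j, A i j * ‖v i‖ ^ 2 + ∑ i, ∑ j, A i j * ‖v j‖ ^ 2
          - 2 * ∑ i, ∑ j, A i j * ⟪v i, v j⟫ := by
        simp [Finset.sum_sub_distrib, Finset.sum_add_distrib, Finset.mul_sum]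
    _ = -2 * ∑ i, ∑ j, A i j * ⟪v i, v j⟫ := by
        have h1 : ∑ i, ∑ j, A i j * ‖v i‖ ^ 2 = 0 := by
          refine Finset.sum_eq_zero fun i _ => ?_
          rw [← Finset.sum_mul, hrow i, zero_mul]
        have h2 : ∑ i, ∑ j, A i j * ‖v j‖ ^ 2 = 0 := by
          rw [Finset.sum_comm]
          refine Finset.sum_eq_zero fun j _ => ?_
          rw [← Finset.sum_mul, hcol j, zero_mul]
        rw [h1, h2]; ring

lemma normalize_contract (a b : EuclideanSpace ℝ (Fin 3))
    (ha : 1 ≤ ‖a‖) (hb : 1 ≤ ‖b‖) :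
    ‖‖a‖⁻¹ • a - ‖b‖⁻¹ • b‖ ^ 2 ≤ ‖a - b‖ ^ 2 := by
  have ha0 : ‖a‖ ≠ 0 := by positivity
  have hb0 : ‖b‖ ≠ 0 := by positivity
  have h1 : ‖a - b‖ ^ 2 = ‖a‖ ^ 2 - 2 * ⟪a, b⟫ + ‖b‖ ^ 2 := by
    rw [@norm_sub_sq_real]
  have h2 : ‖‖a‖⁻¹ • a - ‖b‖⁻¹ • b‖ ^ 2
      = 2 - 2 * (‖a‖⁻¹ * ‖b‖⁻¹ * ⟪a, b⟫) := by
    rw [@norm_sub_sq_real]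
    rw [norm_smul, norm_smul, real_inner_smul_left, real_inner_smul_right]
    simp [abs_of_nonneg (inv_nonneg.mpr (norm_nonneg a)),
      abs_of_nonneg (inv_nonneg.mpr (norm_nonneg b)), ha0, hb0]
    ring
  rw [h1, h2]
  have hc := real_inner_le_norm a b
  set t := ⟪a, b⟫
  set r := ‖a‖
  set s := ‖b‖
  have hrs : (1:ℝ) ≤ r * s := one_le_mul_of_one_le_of_one_le ha hb
  have hinv : r⁻¹ * s⁻¹ = (r * s)⁻¹ := by
    field_simp
  rw [hinv]
  have hpos : (0:ℝ) < r * s := by linarith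
  have hle : (r*s)⁻¹ ≤ 1 := by
    rw [inv_le_one_iff₀]; right; linarith
  have hcancel : (r*s)⁻¹ * (r*s) = 1 := inv_mul_cancel₀ (ne_of_gt hpos)
  nlinarith [mul_nonneg (sub_nonneg.mpr hle) (sub_nonneg.mpr hc),
    sq_nonneg (r - s)]

theorem energy_decrease_renormalization (N : ℕ) (A : Matrix (Fin N) (Fin N) ℝ)
    (hsymm : A.IsSymm) (hoff : ∀ i j, i ≠ j → A i j ≤ 0)
    (hrow : ∀ i, ∑ j, A i j = 0)
    (w : Fin N → EuclideanSpace ℝ (Fin 3)) (hw : ∀ i, 1 ≤ ‖w i‖) :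
    ∑ i, ∑ j, A i j * ⟪‖w i‖⁻¹ • w i, ‖w j‖⁻¹ • w j⟫ ≤
      ∑ i, ∑ j, A i j * ⟪w i, w j⟫ := by
  set v : Fin N → EuclideanSpace ℝ (Fin 3) := fun i => ‖w i‖⁻¹ • w i with hv
  have h1 := quad_identity N A hsymm hrow v
  have h2 := quad_identity N A hsymm hrow w
  have key : ∑ i, ∑ j, A i j * ‖w i - w j‖ ^ 2 ≤ ∑ i, ∑ j, A i j * ‖v i - v j‖ ^ 2 := by
    refine Finset.sum_le_sum fun i _ => Finset.sum_le_sum fun j _ => ?_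
    rcases eq_or_ne i j with rfl | hij
    · simp
    · have hA := hoff i j hij
      have hle := normalize_contract (w i) (w j) (hw i) (hw j)
      nlinarith
  have := h1 ▸ h2 ▸ key
  linarith
end

section
/- Fix α > 0, β ∈ (0, π/2), k₀ > 0, and define d(t), g(t), m(x,t) as in the exact solution: d(t) = √(sin²β + e^{4k₀²αt} cos²β), g'(t) derived from g(t) = (1/α) log((d(t)+e^{2k₀²αt}cos β)/(1+cos β)), m = (1/d)(sin β cos θ, sin β sin θ, e^{2k₀²αt} cos β) with θ = k₀(x₁+x₂) + g(t). Then m satisfies ∂ₜm = -m × Δm - α m × (m × Δm), where Δm = ∂²m/∂x₁² + ∂²m/∂x₂². -/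
open Real

/-!
The solution is a helix `m = (ρ cos θ, ρ sin θ, z)` whose phase `θ = k₀ (x₁ + x₂) + g(t)` is
affine in space, so `Δm = -2k₀² (ρ cos θ, ρ sin θ, 0)`. For such a profile the Landau–Lifshitz
equation reduces to the ODE system `ρ' = -2αk₀² ρ z²`, `z' = 2αk₀² ρ² z`, `g' = 2k₀² z`,
which `ρ = sin β / d`, `z = e^{2k₀²αt} cos β / d` and the logarithmic `g` solve because
`d² = sin² β + (e^{2k₀²αt} cos β)²`.
-/

theorem HasDerivAt.toLp {𝕜 ι : Type*} [NontriviallyNormedField 𝕜] [Fintype ι]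
    {E : ι → Type*} [∀ i, NormedAddCommGroup (E i)] [∀ i, NormedSpace 𝕜 (E i)]
    (p : ENNReal) [Fact (1 ≤ p)] {f : 𝕜 → ∀ i, E i} {f' : ∀ i, E i} {x : 𝕜}
    (h : HasDerivAt f f' x) :
    HasDerivAt (fun t => WithLp.toLp p (f t)) (WithLp.toLp p f') x :=
  (PiLp.hasFDerivAt_toLp p (f x)).comp_hasDerivAt x h

theorem hasDerivAt_exp_const_mul (a t : ℝ) :
    HasDerivAt (fun τ => exp (a * τ)) (a * exp (a * t)) t := by
  simpa [mul_comm] using ((hasDerivAt_id t).const_mul a).exp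

noncomputable def helix (ρ z θ : ℝ) : EuclideanSpace ℝ (Fin 3) :=
  !₂[ρ * cos θ, ρ * sin θ, z]

theorem hasDerivAt_helix {ρ z θ : ℝ → ℝ} {ρ' z' θ' t : ℝ} (hρ : HasDerivAt ρ ρ' t)
    (hz : HasDerivAt z z' t) (hθ : HasDerivAt θ θ' t) :
    HasDerivAt (fun τ => helix (ρ τ) (z τ) (θ τ))
      !₂[ρ' * cos (θ t) - ρ t * (sin (θ t) * θ'),
        ρ' * sin (θ t) + ρ t * (cos (θ t) * θ'), z'] t := by
  refine HasDerivAt.toLp 2 (hasDerivAt_pi.2 fun i => ?_)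
  fin_cases i
  · show HasDerivAt (fun τ => ρ τ * cos (θ τ)) (ρ' * cos (θ t) - ρ t * (sin (θ t) * θ')) t
    exact (hρ.mul hθ.cos).congr_deriv (by ring)
  · exact hρ.mul hθ.sin
  · simpa using hz

theorem hasDerivAt_helix_affine (ρ z k c s : ℝ) :
    HasDerivAt (fun s => helix ρ z (k * s + c)) (k • helix ρ 0 (k * s + c + π / 2)) s := by
  have hθ : HasDerivAt (fun s => k * s + c) k s := by
    simpa using ((hasDerivAt_id s).const_mul k).add_const c
  convert hasDerivAt_helix (hasDerivAt_const s ρ) (hasDerivAt_const s z) hθ using 1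
  ext i; fin_cases i <;> simp [helix, cos_add_pi_div_two, sin_add_pi_div_two] <;> ring

theorem deriv_deriv_helix_affine (ρ z k c s : ℝ) :
    deriv (deriv fun s => helix ρ z (k * s + c)) s = -k ^ 2 • helix ρ 0 (k * s + c) := by
  have h : deriv (fun s => helix ρ z (k * s + c)) =
      fun s => k • helix ρ 0 (k * s + (c + π / 2)) :=
    funext fun s => by rw [← add_assoc]; exact (hasDerivAt_helix_affine ρ z k c s).deriv
  rw [h]
  refine ((hasDerivAt_helix_affine ρ 0 k (c + π / 2) s).const_smul k).deriv.trans ?_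
  rw [smul_smul, show k * s + (c + π / 2) + π / 2 = k * s + c + π by ring]
  ext i; fin_cases i <;> simp [helix, cos_add_pi, sin_add_pi, sq]

theorem laplacian_helix (ρ z k c x₁ x₂ : ℝ) :
    deriv (fun s => deriv (fun s' => helix ρ z (k * (s' + x₂) + c)) s) x₁
      + deriv (fun s => deriv (fun s' => helix ρ z (k * (x₁ + s') + c)) s) x₂
      = -(2 * k ^ 2) • helix ρ 0 (k * (x₁ + x₂) + c) := by
  have h₁ : ∀ s, k * (s + x₂) + c = k * s + (k * x₂ + c) := fun s => by ring
  have h₂ : ∀ s, k * (x₁ + s) + c = k * s + (k * x₁ + c) := fun s => by ring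
  simp only [h₁, h₂]
  rw [deriv_deriv_helix_affine, deriv_deriv_helix_affine, add_left_comm (k * x₂), ← add_smul]
  ring_nf

theorem landauLifshitz_helix {α k t : ℝ} {ρ z θ : ℝ → ℝ}
    (hρ : HasDerivAt ρ (-(2 * α * k ^ 2) * ρ t * z t ^ 2) t)
    (hz : HasDerivAt z (2 * α * k ^ 2 * ρ t ^ 2 * z t) t)
    (hθ : HasDerivAt θ (2 * k ^ 2 * z t) t) :
    let m := helix (ρ t) (z t) (θ t)
    let Δm := -(2 * k ^ 2) • helix (ρ t) 0 (θ t)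
    HasDerivAt (fun τ => helix (ρ τ) (z τ) (θ τ))
      (-(cross3 m Δm) - α • cross3 m (cross3 m Δm)) t := by
  convert hasDerivAt_helix hρ hz hθ using 1
  ext i; fin_cases i <;> simp [cross3, helix]
  · ring
  · ring
  · linear_combination (2 * α * k ^ 2 * ρ t ^ 2 * z t) * sin_sq_add_cos_sq (θ t)

namespace ExactSolution

variable (α k S C : ℝ)

noncomputable def d (t : ℝ) : ℝ := √(S ^ 2 + exp (4 * k ^ 2 * α * t) * C ^ 2)

noncomputable def g (t : ℝ) : ℝ :=
  (1 / α) * log ((d α k S C t + exp (2 * k ^ 2 * α * t) * C) / (1 + C))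

noncomputable def ρ (t : ℝ) : ℝ := S / d α k S C t

noncomputable def z (t : ℝ) : ℝ := exp (2 * k ^ 2 * α * t) * C / d α k S C t

variable {α k S C}

theorem inv_d_smul_eq_helix (t θ : ℝ) :
    (d α k S C t)⁻¹ • !₂[S * cos θ, S * sin θ, exp (2 * k ^ 2 * α * t) * C] =
      helix (ρ α k S C t) (z α k S C t) θ := by
  ext i; fin_cases i <;> simp [helix, ρ, z] <;> ring

theorem exp_four_mul_eq_sq (t : ℝ) :
    exp (4 * k ^ 2 * α * t) = exp (2 * k ^ 2 * α * t) ^ 2 := by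
  rw [← exp_nat_mul]; ring_nf

theorem sq_d (t : ℝ) : d α k S C t ^ 2 = S ^ 2 + (exp (2 * k ^ 2 * α * t) * C) ^ 2 := by
  rw [d, sq_sqrt (by positivity), exp_four_mul_eq_sq]; ring

theorem d_pos (hC : C ≠ 0) (t : ℝ) : 0 < d α k S C t :=
  sqrt_pos.2 (by positivity)

theorem hasDerivAt_d (hC : C ≠ 0) (t : ℝ) :
    HasDerivAt (d α k S C)
      (2 * α * k ^ 2 * (exp (2 * k ^ 2 * α * t) * C) ^ 2 / d α k S C t) t := by
  have hd : 0 < d α k S C t := d_pos hC t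
  refine ((((hasDerivAt_exp_const_mul (4 * k ^ 2 * α) t).mul_const (C ^ 2)).const_add
    (S ^ 2)).sqrt (by positivity)).congr_deriv ?_
  rw [← d, exp_four_mul_eq_sq]
  field_simp
  ring

theorem hasDerivAt_g (hα : α ≠ 0) (hC : 0 < C) (t : ℝ) :
    HasDerivAt (g α k S C) (2 * k ^ 2 * z α k S C t) t := by
  have hd : 0 < d α k S C t := d_pos hC.ne' t
  have hsum : 0 < d α k S C t + exp (2 * k ^ 2 * α * t) * C :=
    add_pos hd (mul_pos (exp_pos _) hC)
  refine (((((hasDerivAt_d hC.ne' t).add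
    ((hasDerivAt_exp_const_mul (2 * k ^ 2 * α) t).mul_const C)).div_const (1 + C)).log
    (div_pos hsum (by linarith)).ne').const_mul (1 / α)).congr_deriv ?_
  rw [z, Pi.add_apply]
  field_simp
  ring

theorem hasDerivAt_ρ (hC : C ≠ 0) (t : ℝ) :
    HasDerivAt (ρ α k S C) (-(2 * α * k ^ 2) * ρ α k S C t * z α k S C t ^ 2) t := by
  have hd : 0 < d α k S C t := d_pos hC t
  refine ((hasDerivAt_const t S).div (hasDerivAt_d hC t) hd.ne').congr_deriv ?_
  rw [ρ, z]
  field_simp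
  ring

theorem hasDerivAt_z (hC : C ≠ 0) (t : ℝ) :
    HasDerivAt (z α k S C) (2 * α * k ^ 2 * ρ α k S C t ^ 2 * z α k S C t) t := by
  have hd : 0 < d α k S C t := d_pos hC t
  have hd2 : d α k S C t ^ 2 = _ := sq_d t
  refine (((hasDerivAt_exp_const_mul (2 * k ^ 2 * α) t).mul_const C).div
    (hasDerivAt_d hC t) hd.ne').congr_deriv ?_
  rw [ρ, z]
  field_simp
  linear_combination (k ^ 2 * α) * hd2

end ExactSolution

theorem exact_solution_solves_LL_general (α β k₀ : ℝ) (hα : 0 < α)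
    (hβ : β ∈ Set.Ioo 0 (π / 2))
    (d g : ℝ → ℝ)
    (hd : ∀ t, d t = Real.sqrt (sin β ^ 2 + Real.exp (4 * k₀ ^ 2 * α * t) * cos β ^ 2))
    (hg : ∀ t, g t = (1 / α) *
      Real.log ((d t + Real.exp (2 * k₀ ^ 2 * α * t) * cos β) / (1 + cos β)))
    (m : ℝ → ℝ → ℝ → EuclideanSpace ℝ (Fin 3))
    (hm : ∀ x₁ x₂ t, m x₁ x₂ t = (d t)⁻¹ •
      (WithLp.toLp 2 ![sin β * cos (k₀ * (x₁ + x₂) + g t),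
         sin β * sin (k₀ * (x₁ + x₂) + g t),
         Real.exp (2 * k₀ ^ 2 * α * t) * cos β] : EuclideanSpace ℝ (Fin 3)))
    (x₁ x₂ t : ℝ)
    (Δm : EuclideanSpace ℝ (Fin 3))
    (hΔm : Δm = deriv (fun s => deriv (fun s' => m s' x₂ t) s) x₁
              + deriv (fun s => deriv (fun s' => m x₁ s' t) s) x₂) :
    deriv (fun τ => m x₁ x₂ τ) t
      = -(cross3 (m x₁ x₂ t) Δm) - α • cross3 (m x₁ x₂ t) (cross3 (m x₁ x₂ t) Δm) := by
  have hC : 0 < cos β := cos_pos_of_mem_Ioo ⟨by linarith [hβ.1, pi_pos], hβ.2⟩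
  obtain rfl : d = ExactSolution.d α k₀ (sin β) (cos β) := funext hd
  obtain rfl : g = ExactSolution.g α k₀ (sin β) (cos β) := funext hg
  obtain rfl : m = fun x₁ x₂ τ => helix (ExactSolution.ρ α k₀ (sin β) (cos β) τ)
      (ExactSolution.z α k₀ (sin β) (cos β) τ)
      (k₀ * (x₁ + x₂) + ExactSolution.g α k₀ (sin β) (cos β) τ) :=
    funext fun x₁ => funext fun x₂ => funext fun τ =>
      (hm x₁ x₂ τ).trans (ExactSolution.inv_d_smul_eq_helix τ _)
  rw [hΔm, laplacian_helix]
  exact (landauLifshitz_helix (ExactSolution.hasDerivAt_ρ hC.ne' t)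
    (ExactSolution.hasDerivAt_z hC.ne' t)
    ((ExactSolution.hasDerivAt_g hα.ne' hC t).const_add _)).deriv

theorem exact_solution_solves_LL (α β k₀ : ℝ) (hα : 0 < α)
    (hβ : β ∈ Set.Ioo 0 (π / 2)) (hk₀ : 0 < k₀)
    (d g : ℝ → ℝ)
    (hd : ∀ t, d t = Real.sqrt (sin β ^ 2 + Real.exp (4 * k₀ ^ 2 * α * t) * cos β ^ 2))
    (hg : ∀ t, g t = (1 / α) *
      Real.log ((d t + Real.exp (2 * k₀ ^ 2 * α * t) * cos β) / (1 + cos β)))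
    (m : ℝ → ℝ → ℝ → EuclideanSpace ℝ (Fin 3))
    (hm : ∀ x₁ x₂ t, m x₁ x₂ t = (d t)⁻¹ •
      (WithLp.toLp 2 ![sin β * cos (k₀ * (x₁ + x₂) + g t),
         sin β * sin (k₀ * (x₁ + x₂) + g t),
         Real.exp (2 * k₀ ^ 2 * α * t) * cos β] : EuclideanSpace ℝ (Fin 3)))
    (x₁ x₂ t : ℝ) (ht : 0 < t)
    (Δm : EuclideanSpace ℝ (Fin 3))
    (hΔm : Δm = deriv (fun s => deriv (fun s' => m s' x₂ t) s) x₁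
              + deriv (fun s => deriv (fun s' => m x₁ s' t) s) x₂) :
    deriv (fun τ => m x₁ x₂ τ) t
      = -(cross3 (m x₁ x₂ t) Δm) - α • cross3 (m x₁ x₂ t) (cross3 (m x₁ x₂ t) Δm) :=
  exact_solution_solves_LL_general α β k₀ hα hβ d g hd hg m hm x₁ x₂ t Δm hΔm
end
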